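/- arXiv:2301.08602 — 3 statements merged into one kernel-verified Lean document; each statement's English description precedes it below -/
import Mathlib

section
/- Let X be a random k×m real matrix with E[‖X‖^r] < ∞ for some r > 1, and let 1 ≤ q < r. Then there is a constant C > 0 (depending on m, k, q, r and the law of X but not on A) such that for every deterministic m×k matrix A one has E[‖AX‖^r] ≤ C · (E[‖AX‖^q])^{r/q}, where ‖·‖ is the Frobenius (Hilbert–Schmidt) norm. -/
open MeasureTheory

noncomputable def frob {a b : Type*} [Fintype a] [Fintype b]
    (M : Matrix a b ℝ) : ℝ :=
  Real.sqrt (∑ i, ∑ j, (M i j) ^ 2)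

private lemma continuous_rpow_c {c : ℝ} (hc : 0 ≤ c) : Continuous fun x : ℝ => x ^ c :=
  continuous_iff_continuousAt.2 fun x => Real.continuousAt_rpow_const x c (Or.inr hc)

private lemma frob_nonneg {a b : Type*} [Fintype a] [Fintype b] (M : Matrix a b ℝ) :
    0 ≤ frob M := Real.sqrt_nonneg _

private lemma frob_eq_zero {a b : Type*} [Fintype a] [Fintype b] {M : Matrix a b ℝ}
    (h : frob M = 0) : M = 0 := by
  have hS : (0:ℝ) ≤ ∑ i, ∑ j, (M i j) ^ 2 := by positivity
  have h0 : ∑ i, ∑ j, (M i j) ^ 2 = 0 := le_antisymm (Real.sqrt_eq_zero'.1 h) hS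
  ext i j
  have h1 := (Finset.sum_eq_zero_iff_of_nonneg (fun i _ => by positivity)).1 h0 i (Finset.mem_univ i)
  have h2 := (Finset.sum_eq_zero_iff_of_nonneg (fun j _ => by positivity)).1 h1 j (Finset.mem_univ j)
  simpa using (pow_eq_zero_iff two_ne_zero).1 h2

private lemma frob_smul {a b : Type*} [Fintype a] [Fintype b] (c : ℝ) (M : Matrix a b ℝ) :
    frob (c • M) = |c| * frob M := by
  unfold frob
  have : ∀ i j, ((c • M) i j) ^ 2 = c ^ 2 * (M i j) ^ 2 := by
    intro i j; simp [Matrix.smul_apply, smul_eq_mul, mul_pow]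
  simp_rw [this, ← Finset.mul_sum]
  rw [Real.sqrt_mul (sq_nonneg c), Real.sqrt_sq_eq_abs]

private lemma frob_mul_le {a b c : Type*} [Fintype a] [Fintype b] [Fintype c]
    (A : Matrix a b ℝ) (B : Matrix b c ℝ) : frob (A * B) ≤ frob A * frob B := by
  unfold frob
  have key : ∀ (i : a) (j : c), ((A * B) i j) ^ 2 ≤ (∑ t, (A i t) ^ 2) * (∑ t, (B t j) ^ 2) := by
    intro i j
    rw [Matrix.mul_apply]
    exact Finset.sum_mul_sq_le_sq_mul_sq _ _ _
  have hsum : ∑ i, ∑ j, ((A * B) i j) ^ 2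
      ≤ (∑ i, ∑ t, (A i t) ^ 2) * (∑ t, ∑ j, (B t j) ^ 2) := by
    calc ∑ i, ∑ j, ((A * B) i j) ^ 2
        ≤ ∑ i, ∑ j, (∑ t, (A i t) ^ 2) * (∑ t, (B t j) ^ 2) := by
          refine Finset.sum_le_sum fun i _ => Finset.sum_le_sum fun j _ => key i j
      _ = (∑ i, ∑ t, (A i t) ^ 2) * (∑ j, ∑ t, (B t j) ^ 2) := by
          simp_rw [← Finset.mul_sum, ← Finset.sum_mul]
      _ = (∑ i, ∑ t, (A i t) ^ 2) * (∑ t, ∑ j, (B t j) ^ 2) := by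
          congr 1
          exact Finset.sum_comm
  calc Real.sqrt (∑ i, ∑ j, ((A * B) i j) ^ 2)
      ≤ Real.sqrt ((∑ i, ∑ t, (A i t) ^ 2) * (∑ t, ∑ j, (B t j) ^ 2)) := Real.sqrt_le_sqrt hsum
    _ = _ := Real.sqrt_mul (by positivity) _

private lemma comparison {E : Type*} [NormedAddCommGroup E] [NormedSpace ℝ E]
    [FiniteDimensional ℝ E] {F G : E → ℝ} {r q : ℝ} (hq : 0 < q) (hr : 0 < r)
    (hF0 : ∀ x, 0 ≤ F x) (hG0 : ∀ x, 0 ≤ G x)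
    (hFc : Continuous F) (hGc : Continuous G)
    (hFh : ∀ (c : ℝ), 0 ≤ c → ∀ x, F (c • x) = c ^ r * F x)
    (hGh : ∀ (c : ℝ), 0 ≤ c → ∀ x, G (c • x) = c ^ q * G x)
    (N : Submodule ℝ E)
    (hNF : ∀ n ∈ N, ∀ x, F (n + x) = F x)
    (hNG : ∀ n ∈ N, ∀ x, G (n + x) = G x)
    (hGpos : ∀ x, x ∉ N → 0 < G x) :
    ∃ C : ℝ, 0 < C ∧ ∀ x, F x ≤ C * G x ^ (r / q) := by
  have hF00 : F 0 = 0 := by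
    have := hFh 0 le_rfl 0
    simpa [Real.zero_rpow hr.ne'] using this
  obtain ⟨W, hW⟩ := Submodule.exists_isCompl N
  have hdec : ∀ x : E, ∃ n ∈ N, ∃ w ∈ W, n + w = x := by
    intro x
    have : x ∈ N ⊔ W := by rw [hW.sup_eq_top]; exact Submodule.mem_top
    exact Submodule.mem_sup.1 this
  by_cases hWbot : W = ⊥
  · refine ⟨1, one_pos, fun x => ?_⟩
    obtain ⟨n, hn, w, hw, hx⟩ := hdec x
    have hw0 : w = 0 := by rw [hWbot] at hw; simpa using hw
    have : F x = 0 := by rw [← hx, hw0, add_zero] at *; rw [← hF00, ← hNF n hn 0, add_zero]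
    rw [this, one_mul]
    exact Real.rpow_nonneg (hG0 x) _
  · obtain ⟨w₀, hw₀W, hw₀⟩ := (Submodule.ne_bot_iff W).1 hWbot
    have hsph : (Metric.sphere (0 : W) 1).Nonempty := by
      refine ⟨‖(⟨w₀, hw₀W⟩ : W)‖⁻¹ • ⟨w₀, hw₀W⟩, ?_⟩
      rw [mem_sphere_zero_iff_norm]
      exact norm_smul_inv_norm (by simpa using hw₀)
    have hFcW : Continuous fun w : W => F (w : E) := hFc.comp continuous_subtype_val
    have hGcW : Continuous fun w : W => G (w : E) := hGc.comp continuous_subtype_val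
    obtain ⟨uM, huM, hmax⟩ :=
      (isCompact_sphere (0 : W) 1).exists_isMaxOn hsph hFcW.continuousOn
    obtain ⟨ug, hug, hmin⟩ :=
      (isCompact_sphere (0 : W) 1).exists_isMinOn hsph hGcW.continuousOn
    set M := F (uM : E) with hM
    set ε := G (ug : E) with hε
    have hεpos : 0 < ε := by
      refine hGpos _ fun hinN => ?_
      have : (ug : E) ∈ N ⊓ W := ⟨hinN, ug.2⟩
      rw [hW.inf_eq_bot] at this
      have hugz : (ug : E) = 0 := by simpa using this
      have h1 : ‖ug‖ = 1 := mem_sphere_zero_iff_norm.1 hug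
      rw [show ug = 0 from Subtype.ext hugz] at h1
      simp at h1
    have hM0 : 0 ≤ M := hF0 _
    have hεr : (0:ℝ) < ε ^ (r / q) := Real.rpow_pos_of_pos hεpos _
    refine ⟨(M + 1) / ε ^ (r / q), by positivity, fun x => ?_⟩
    obtain ⟨n, hn, w, hw, hx⟩ := hdec x
    have hFx : F x = F w := by rw [← hx]; exact hNF n hn w
    have hGx : G x = G w := by rw [← hx]; exact hNG n hn w
    by_cases hw0 : w = 0
    · rw [hFx, hw0, hF00]
      exact mul_nonneg (by positivity) (Real.rpow_nonneg (hG0 x) _)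
    · set wW : W := ⟨w, hw⟩ with hwW
      have hwW0 : wW ≠ 0 := fun h => hw0 (by simpa [hwW] using congrArg Subtype.val h)
      set c : ℝ := ‖wW‖ with hc
      have hcpos : 0 < c := norm_pos_iff.2 hwW0
      set u : W := c⁻¹ • wW with hu
      have husph : u ∈ Metric.sphere (0 : W) 1 := by
        rw [mem_sphere_zero_iff_norm]
        exact norm_smul_inv_norm hwW0
      have hwu : w = c • (u : E) := by
        rw [hu]
        push_cast
        rw [smul_inv_smul₀ hcpos.ne']
      have hFu : F (u : E) ≤ M := isMaxOn_iff.1 hmax u husph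
      have hGu : ε ≤ G (u : E) := isMinOn_iff.1 hmin u husph
      have hqr : q * (r / q) = r := by field_simp
      have hGxval : G x = c ^ q * G (u : E) := by
        rw [hGx, hwu, hGh c hcpos.le]
      have hrq0 : (0:ℝ) ≤ r / q := by positivity
      have hstep : c ^ r * ε ^ (r / q) ≤ G x ^ (r / q) := by
        rw [hGxval]
        have h1 : c ^ q * ε ≤ c ^ q * G (u : E) :=
          mul_le_mul_of_nonneg_left hGu (Real.rpow_nonneg hcpos.le _)
        have h2 : (c ^ q * ε) ^ (r / q) ≤ (c ^ q * G (u : E)) ^ (r / q) :=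
          Real.rpow_le_rpow (by positivity) h1 hrq0
        calc c ^ r * ε ^ (r / q)
            = (c ^ q) ^ (r / q) * ε ^ (r / q) := by
              rw [← Real.rpow_mul hcpos.le, hqr]
          _ = (c ^ q * ε) ^ (r / q) := by
              rw [Real.mul_rpow (Real.rpow_nonneg hcpos.le _) hεpos.le]
          _ ≤ _ := h2
      calc F x = c ^ r * F (u : E) := by rw [hFx, hwu, hFh c hcpos.le]
        _ ≤ c ^ r * (M + 1) := by
            refine mul_le_mul_of_nonneg_left ?_ (Real.rpow_nonneg hcpos.le _)
            linarith
        _ = (M + 1) / ε ^ (r / q) * (c ^ r * ε ^ (r / q)) := by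
            field_simp
        _ ≤ (M + 1) / ε ^ (r / q) * G x ^ (r / q) := by
            refine mul_le_mul_of_nonneg_left hstep ?_
            positivity

theorem stmt5 (k m : ℕ) (r q : ℝ) (hr : 1 < r) (hq1 : 1 ≤ q) (hqr : q < r)
    (Ω : Type*) [MeasurableSpace Ω] (μ : Measure Ω) [IsProbabilityMeasure μ]
    (X : Ω → Matrix (Fin k) (Fin m) ℝ)
    (hmeas : ∀ i j, Measurable fun ω => X ω i j)
    (hint : Integrable (fun ω => frob (X ω) ^ r) μ) :
    ∃ C : ℝ, 0 < C ∧ ∀ A : Matrix (Fin m) (Fin k) ℝ,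
      ∫ ω, frob (A * X ω) ^ r ∂μ
        ≤ C * (∫ ω, frob (A * X ω) ^ q ∂μ) ^ (r / q) := by
  have hq0 : (0:ℝ) < q := lt_of_lt_of_le one_pos hq1
  have hr0 : (0:ℝ) < r := lt_trans one_pos hr
  set T : EuclideanSpace ℝ (Fin m × Fin k) → Matrix (Fin m) (Fin k) ℝ :=
    fun x => Matrix.of fun i j => x (i, j) with hT
  have hTadd : ∀ x y, T (x + y) = T x + T y := fun x y => rfl
  have hTsmul : ∀ (c : ℝ) x, T (c • x) = c • T x := fun c x => rfl
  have hT0 : T 0 = 0 := rfl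
  have hfrobT : ∀ x, frob (T x) = ‖x‖ := by
    intro x
    rw [EuclideanSpace.norm_eq]
    unfold frob
    rw [Fintype.sum_prod_type]
    simp [Real.norm_eq_abs, sq_abs, hT]
  -- measurability
  have hmeasA : ∀ (A : Matrix (Fin m) (Fin k) ℝ) (p : ℝ), 0 ≤ p →
      Measurable fun ω => frob (A * X ω) ^ p := by
    intro A p hp
    have h1 : Measurable fun ω => ∑ i, ∑ j, ((A * X ω) i j) ^ 2 := by
      refine Finset.measurable_sum _ fun i _ => Finset.measurable_sum _ fun j _ => ?_
      have h2 : Measurable fun ω => (A * X ω) i j := by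
        simp_rw [Matrix.mul_apply]
        exact Finset.measurable_sum _ fun t _ => (hmeas t j).const_mul (A i t)
      exact h2.pow_const 2
    exact (continuous_rpow_c hp).measurable.comp (Real.continuous_sqrt.measurable.comp h1)
  -- elementary bound
  have hple : ∀ (p : ℝ), 0 ≤ p → p ≤ r → ∀ y : ℝ, 0 ≤ y → y ^ p ≤ 1 + y ^ r := by
    intro p hp hpr y hy
    rcases le_total y 1 with h | h
    · have h1 := Real.rpow_le_one hy h hp
      have h2 : 0 ≤ y ^ r := Real.rpow_nonneg hy r
      linarith
    · have h1 := Real.rpow_le_rpow_of_exponent_le h hpr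
      linarith
  have hdom : Integrable (fun ω => 1 + frob (X ω) ^ r) μ := (integrable_const 1).add hint
  have hintA : ∀ (A : Matrix (Fin m) (Fin k) ℝ) (p : ℝ), 0 ≤ p → p ≤ r →
      Integrable (fun ω => frob (A * X ω) ^ p) μ := by
    intro A p hp hpr
    refine (hdom.const_mul (frob A ^ p)).mono' (hmeasA A p hp).aestronglyMeasurable ?_
    refine Filter.Eventually.of_forall fun ω => ?_
    rw [Real.norm_eq_abs, abs_of_nonneg (Real.rpow_nonneg (frob_nonneg _) p)]
    calc frob (A * X ω) ^ p ≤ (frob A * frob (X ω)) ^ p :=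
          Real.rpow_le_rpow (frob_nonneg _) (frob_mul_le A (X ω)) hp
      _ = frob A ^ p * frob (X ω) ^ p := Real.mul_rpow (frob_nonneg _) (frob_nonneg _)
      _ ≤ frob A ^ p * (1 + frob (X ω) ^ r) :=
          mul_le_mul_of_nonneg_left (hple p hp hpr _ (frob_nonneg _))
            (Real.rpow_nonneg (frob_nonneg _) p)
  have hfrobTmul : ∀ (x : EuclideanSpace ℝ (Fin m × Fin k)) (B : Matrix (Fin k) (Fin m) ℝ),
      frob (T x * B) ≤ ‖x‖ * frob B := by
    intro x B
    calc frob (T x * B) ≤ frob (T x) * frob B := frob_mul_le _ _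
      _ = ‖x‖ * frob B := by rw [hfrobT]
  -- continuity
  have hcont : ∀ (p : ℝ), 0 ≤ p → p ≤ r →
      Continuous fun x : EuclideanSpace ℝ (Fin m × Fin k) =>
        ∫ ω, frob (T x * X ω) ^ p ∂μ := by
    intro p hp hpr
    refine continuous_iff_continuousAt.2 fun x₀ => ?_
    refine continuousAt_of_dominated
      (bound := fun ω => (‖x₀‖ + 1) ^ p * (1 + frob (X ω) ^ r)) ?_ ?_ ?_ ?_
    · exact Filter.Eventually.of_forall fun x => (hmeasA (T x) p hp).aestronglyMeasurable
    · rw [Metric.eventually_nhds_iff]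
      refine ⟨1, one_pos, fun x hx => Filter.Eventually.of_forall fun ω => ?_⟩
      have hxn : ‖x‖ ≤ ‖x₀‖ + 1 := by
        have h1 := norm_sub_norm_le x x₀
        rw [← dist_eq_norm] at h1
        linarith
      rw [Real.norm_eq_abs, abs_of_nonneg (Real.rpow_nonneg (frob_nonneg _) p)]
      calc frob (T x * X ω) ^ p ≤ (‖x‖ * frob (X ω)) ^ p :=
            Real.rpow_le_rpow (frob_nonneg _) (hfrobTmul x (X ω)) hp
        _ = ‖x‖ ^ p * frob (X ω) ^ p := Real.mul_rpow (norm_nonneg _) (frob_nonneg _)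
        _ ≤ (‖x₀‖ + 1) ^ p * (1 + frob (X ω) ^ r) := by
            refine mul_le_mul (Real.rpow_le_rpow (norm_nonneg _) hxn hp)
              (hple p hp hpr _ (frob_nonneg _)) (Real.rpow_nonneg (frob_nonneg _) _)
              (Real.rpow_nonneg (by positivity) _)
    · exact hdom.const_mul _
    · refine Filter.Eventually.of_forall fun ω => ?_
      have hc : Continuous fun x : EuclideanSpace ℝ (Fin m × Fin k) =>
          frob (T x * X ω) ^ p := by
        refine (continuous_rpow_c hp).comp (Real.continuous_sqrt.comp ?_)
        refine continuous_finset_sum _ fun i _ => continuous_finset_sum _ fun j _ => ?_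
        have h3 : Continuous fun x : EuclideanSpace ℝ (Fin m × Fin k) => (T x * X ω) i j := by
          simp_rw [Matrix.mul_apply]
          refine continuous_finset_sum _ fun t _ => ?_
          have h4 : Continuous fun x : EuclideanSpace ℝ (Fin m × Fin k) => x (i, t) :=
            (continuous_apply (i, t)).comp (PiLp.continuous_ofLp 2 _)
          exact h4.mul continuous_const
        exact h3.pow 2
      exact hc.continuousAt
  -- the kernel submodule
  set N : Submodule ℝ (EuclideanSpace ℝ (Fin m × Fin k)) :=
    { carrier := {x | ∀ᵐ ω ∂μ, T x * X ω = 0}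
      add_mem' := by
        intro x y hx hy
        show ∀ᵐ ω ∂μ, T (x + y) * X ω = 0
        filter_upwards [hx, hy] with ω h1 h2
        rw [hTadd, Matrix.add_mul, h1, h2, add_zero]
      zero_mem' := by
        show ∀ᵐ ω ∂μ, T 0 * X ω = 0
        exact Filter.Eventually.of_forall fun ω => by rw [hT0, Matrix.zero_mul]
      smul_mem' := by
        intro c x hx
        show ∀ᵐ ω ∂μ, T (c • x) * X ω = 0
        filter_upwards [hx] with ω h1
        rw [hTsmul, Matrix.smul_mul, h1, smul_zero] } with hN
  have hNmem : ∀ x, x ∈ N ↔ ∀ᵐ ω ∂μ, T x * X ω = 0 := fun x => Iff.rfl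
  have hNinv : ∀ (p : ℝ), ∀ n ∈ N, ∀ x,
      (∫ ω, frob (T (n + x) * X ω) ^ p ∂μ) = ∫ ω, frob (T x * X ω) ^ p ∂μ := by
    intro p n hn x
    refine integral_congr_ae ?_
    filter_upwards [(hNmem n).1 hn] with ω h1
    show frob (T (n + x) * X ω) ^ p = frob (T x * X ω) ^ p
    rw [hTadd, Matrix.add_mul, h1, zero_add]
  have hhom : ∀ (p : ℝ), 0 ≤ p → ∀ (c : ℝ), 0 ≤ c → ∀ x,
      (∫ ω, frob (T (c • x) * X ω) ^ p ∂μ) = c ^ p * ∫ ω, frob (T x * X ω) ^ p ∂μ := by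
    intro p hp c hc x
    rw [← integral_const_mul]
    refine integral_congr_ae (Filter.Eventually.of_forall fun ω => ?_)
    show frob (T (c • x) * X ω) ^ p = c ^ p * frob (T x * X ω) ^ p
    rw [hTsmul, Matrix.smul_mul, frob_smul, abs_of_nonneg hc,
        Real.mul_rpow hc (frob_nonneg _)]
  have hGpos : ∀ x, x ∉ N → 0 < ∫ ω, frob (T x * X ω) ^ q ∂μ := by
    intro x hx
    have h0 : (0:ℝ) ≤ ∫ ω, frob (T x * X ω) ^ q ∂μ :=
      integral_nonneg fun ω => Real.rpow_nonneg (frob_nonneg _) q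
    rcases h0.lt_or_eq with h | h
    · exact h
    · exfalso
      apply hx
      rw [hNmem]
      have hz : (fun ω => frob (T x * X ω) ^ q) =ᵐ[μ] 0 :=
        (integral_eq_zero_iff_of_nonneg (fun ω => Real.rpow_nonneg (frob_nonneg _) q)
          (hintA (T x) q hq0.le hqr.le)).1 h.symm
      filter_upwards [hz] with ω h1
      simp only [Pi.zero_apply] at h1
      exact frob_eq_zero ((Real.rpow_eq_zero (frob_nonneg _) hq0.ne').1 h1)
  obtain ⟨C, hC, hCle⟩ := comparison (r := r) (q := q)
    (F := fun x => ∫ ω, frob (T x * X ω) ^ r ∂μ)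
    (G := fun x => ∫ ω, frob (T x * X ω) ^ q ∂μ) hq0 hr0
    (fun x => integral_nonneg fun ω => Real.rpow_nonneg (frob_nonneg _) r)
    (fun x => integral_nonneg fun ω => Real.rpow_nonneg (frob_nonneg _) q)
    (hcont r hr0.le le_rfl) (hcont q hq0.le hqr.le)
    (fun c hc x => hhom r hr0.le c hc x)
    (fun c hc x => hhom q hq0.le c hc x)
    N (fun n hn x => hNinv r n hn x) (fun n hn x => hNinv q n hn x) hGpos
  refine ⟨C, hC, fun A => ?_⟩
  have hTA : T ((WithLp.equiv 2 (Fin m × Fin k → ℝ)).symm (fun p => A p.1 p.2)) = A := rfl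
  have h := hCle ((WithLp.equiv 2 (Fin m × Fin k → ℝ)).symm (fun p => A p.1 p.2))
  simp only [hTA] at h
  exact h
end

section
/- Let ρ > 1 and let W > 0 be a fixed positive real. Define T_n = log_ρ(n(ρ−1)/W) and t_n = h(T_n) where h(x) = ⌊x⌋ + (ρ^{x}−1)/(ρ−1). Suppose (τ_k) is a sequence of reals such that for every δ > 0 and all sufficiently large k: k/(ρ^{τ_k} l_ρ(τ_k)) ≤ W e^δ/(ρ−1) and k/(ρ^{τ_k − δ} l_ρ(τ_k − δ)) ≥ W e^{−δ}/(ρ−1), where l_ρ(x) = (1+(ρ−1){x})ρ^{−{x}}. Then τ_k − t_k → 0 as k → ∞. -/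
open Filter

/-- The 1-periodic function `l_ρ(x) = (1+(ρ−1){x})·ρ^{−{x}}`. -/
noncomputable def lrho (ρ x : ℝ) : ℝ :=
  (1 + (ρ - 1) * Int.fract x) * ρ ^ (-Int.fract x)

/-- `h(x) = ⌊x⌋ + (ρ^{x} − 1)/(ρ − 1)`. -/
noncomputable def hfun (ρ x : ℝ) : ℝ :=
  (⌊x⌋ : ℝ) + (ρ ^ Int.fract x - 1) / (ρ - 1)

/-!
With `T_k = log_ρ(k(ρ-1)/W)`, the identity `ρ^x · l_ρ(x) = ρ^{h⁻¹(x)}` turns the two hypotheses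
into `T_k - δ / log ρ ≤ h⁻¹(τ_k)` and `h⁻¹(τ_k - δ) ≤ T_k + δ / log ρ`. Applying the monotone map
`h`, a left inverse of `h⁻¹`, squeezes `τ_k` between `h(T_k - δ / log ρ)` and
`h(T_k + δ / log ρ) + δ`. Both bounds are close to `t_k = h(T_k)` uniformly in `k`, because `h` is
the identity plus a continuous 1-periodic function and hence uniformly continuous.
-/

theorem Function.Periodic.uniformContinuous_of_continuous {β : Type*} [PseudoMetricSpace β]
    {f : ℝ → β} {c : ℝ} (hp : Function.Periodic f c) (hc : 0 < c) (hf : Continuous f) :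
    UniformContinuous f := by
  have hK := isCompact_Icc.uniformContinuousOn_of_continuous
    (hf.continuousOn (s := Set.Icc (-c) (2 * c)))
  rw [Metric.uniformContinuousOn_iff] at hK
  rw [Metric.uniformContinuous_iff]
  intro ε hε
  obtain ⟨η, hη, hfη⟩ := hK ε hε
  refine ⟨min η c, lt_min hη hc, fun {a b} hab => ?_⟩
  -- translate `a` into `[0, c)` by a multiple of the period, and `b` along with it
  set n := toIcoDiv hc 0 a
  have ha : a - n • c ∈ Set.Ico 0 c := by
    rw [self_sub_toIcoDiv_zsmul]; exact toIcoMod_mem_Ico' hc a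
  have hbc := abs_lt.1 (Real.dist_eq a b ▸ hab.trans_le (min_le_right η c))
  rw [← hp.sub_zsmul_eq n, ← hp.sub_zsmul_eq (x := b) n]
  refine hfη _ ⟨by linarith [ha.1], by linarith [ha.2]⟩
    _ ⟨by linarith [ha.1, hbc.2], by linarith [ha.2, hbc.1]⟩ ?_
  rw [dist_sub_right]
  exact hab.trans_le (min_le_left η c)

lemma logb_le_add_of_le_exp_mul {b x y δ : ℝ} (hb : 1 < b) (hx : 0 < x)
    (h : x ≤ Real.exp δ * y) : Real.logb b x ≤ Real.logb b y + δ / Real.log b := by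
  have hy : 0 < y := pos_of_mul_pos_right (hx.trans_le h) (Real.exp_pos δ).le
  calc Real.logb b x ≤ Real.logb b (Real.exp δ * y) := Real.logb_le_logb_of_le hb hx h
    _ = Real.logb b y + δ / Real.log b := by
      rw [Real.logb_mul (Real.exp_ne_zero δ) hy.ne', Real.logb, Real.log_exp, add_comm]

lemma tendsto_sub_comp_of_squeeze {α : Type*} {l : Filter α} {f : ℝ → ℝ}
    (hf : UniformContinuous f) {u v : α → ℝ}
    (h : ∀ δ > 0, ∀ᶠ k in l, f (v k - δ) ≤ u k ∧ u k ≤ f (v k + δ) + δ) :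
    Tendsto (fun k => u k - f (v k)) l (nhds 0) := by
  rw [Metric.uniformContinuous_iff] at hf
  rw [Metric.tendsto_nhds]
  intro ε hε
  obtain ⟨η, hη, hfη⟩ := hf (ε / 2) (half_pos hε)
  obtain ⟨δ, hδ, hδη, hδε⟩ : ∃ δ, 0 < δ ∧ δ < η ∧ δ < ε / 2 := by
    obtain ⟨δ, hδ, hδlt⟩ := exists_between (lt_min hη (half_pos hε))
    exact ⟨δ, hδ, lt_min_iff.1 hδlt⟩
  filter_upwards [h δ hδ] with k ⟨hlo, hhi⟩
  have hleft := hfη (a := v k - δ) (b := v k) (by simpa [Real.dist_eq, abs_of_pos hδ] using hδη)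
  have hright := hfη (a := v k + δ) (b := v k) (by simpa [Real.dist_eq, abs_of_pos hδ] using hδη)
  rw [Real.dist_eq, abs_lt] at hleft hright ⊢
  rw [sub_zero]
  constructor <;> linarith [hleft.1, hright.2]

/-- The paper's `h⁻¹`. -/
noncomputable def hinv (ρ x : ℝ) : ℝ :=
  (⌊x⌋ : ℝ) + Real.logb ρ (1 + (ρ - 1) * Int.fract x)

section

variable {ρ W k t δ : ℝ}

lemma one_add_mul_fract_pos (hρ : 1 < ρ) (x : ℝ) : 0 < 1 + (ρ - 1) * Int.fract x := by
  nlinarith [Int.fract_nonneg x]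

lemma one_add_mul_fract_lt (hρ : 1 < ρ) (x : ℝ) : 1 + (ρ - 1) * Int.fract x < ρ := by
  nlinarith [Int.fract_lt_one x]

lemma rpow_mul_lrho (hρ : 1 < ρ) (x : ℝ) : ρ ^ x * lrho ρ x = ρ ^ hinv ρ x := by
  have hρ0 : 0 < ρ := by linarith
  nth_rw 1 [← Int.floor_add_fract x]
  rw [hinv, lrho, Real.rpow_add hρ0, Real.rpow_add hρ0,
    Real.rpow_logb hρ0 hρ.ne' (one_add_mul_fract_pos hρ x), Real.rpow_neg hρ0.le]
  field_simp

lemma hfun_intCast_add (n : ℤ) {s : ℝ} (hs : s ∈ Set.Ico 0 1) :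
    hfun ρ (n + s) = n + (ρ ^ s - 1) / (ρ - 1) := by
  rw [hfun, Int.floor_intCast_add, Int.fract_intCast_add, Int.floor_eq_zero_iff.2 hs,
    Int.fract_eq_self.2 hs, add_zero]

lemma hfun_hinv (hρ : 1 < ρ) (x : ℝ) : hfun ρ (hinv ρ x) = x := by
  have hρ0 : 0 < ρ := by linarith
  have hpos := one_add_mul_fract_pos hρ x
  have hlog_mem : Real.logb ρ (1 + (ρ - 1) * Int.fract x) ∈ Set.Ico 0 1 :=
    ⟨Real.logb_nonneg hρ (by nlinarith [Int.fract_nonneg x]),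
      (Real.logb_lt_logb hρ hpos (one_add_mul_fract_lt hρ x)).trans_eq (Real.logb_self_eq_one hρ)⟩
  rw [hinv, hfun_intCast_add _ hlog_mem, Real.rpow_logb hρ0 hρ.ne' hpos, add_sub_cancel_left,
    mul_div_cancel_left₀ _ (by linarith), Int.floor_add_fract]

lemma div_rpow_fract_mem_Ico (hρ : 1 < ρ) (x : ℝ) :
    (ρ ^ Int.fract x - 1) / (ρ - 1) ∈ Set.Ico 0 1 := by
  have hρ1 : 0 < ρ - 1 := by linarith
  have hlo : 1 ≤ ρ ^ Int.fract x := Real.one_le_rpow hρ.le (Int.fract_nonneg x)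
  have hhi : ρ ^ Int.fract x < ρ :=
    (Real.rpow_lt_rpow_of_exponent_lt hρ (Int.fract_lt_one x)).trans_eq (Real.rpow_one ρ)
  exact ⟨div_nonneg (by linarith) hρ1.le, (div_lt_one hρ1).2 (by linarith)⟩

lemma hfun_monotone (hρ : 1 < ρ) : Monotone (hfun ρ) := by
  intro x y hxy
  rcases (Int.floor_le_floor hxy).eq_or_lt with hfl | hfl
  · have hfract : Int.fract x ≤ Int.fract y := by
      rw [Int.fract, Int.fract, hfl]; linarith
    have hρ1 : 0 < ρ - 1 := by linarith
    rw [hfun, hfun, hfl]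
    gcongr
    exact hρ.le
  · have hfl' : (⌊x⌋ : ℝ) + 1 ≤ ⌊y⌋ := by exact_mod_cast hfl
    rw [hfun, hfun]
    linarith [(div_rpow_fract_mem_Ico hρ x).2, (div_rpow_fract_mem_Ico hρ y).1]

lemma hfun_uniformContinuous (hρ : 1 < ρ) : UniformContinuous (hfun ρ) := by
  set g : ℝ → ℝ := fun s => (ρ ^ s - 1) / (ρ - 1) - s
  have hg : Continuous (g ∘ Int.fract) := by
    refine ContinuousOn.comp_fract'' (Continuous.continuousOn ?_) ?_
    · have : Continuous fun s : ℝ => ρ ^ s := Real.continuous_const_rpow (by linarith)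
      fun_prop
    · simp [g, div_self (sub_ne_zero.2 hρ.ne')]
  have hg_periodic : Function.Periodic (g ∘ Int.fract) 1 := (Int.fract_periodic ℝ).comp g
  have hfun_eq : hfun ρ = fun x => x + (g ∘ Int.fract) x := funext fun x => by
    simp only [hfun, g, Function.comp]
    linarith [Int.floor_add_fract x]
  rw [hfun_eq]
  exact uniformContinuous_id.add (hg_periodic.uniformContinuous_of_continuous one_pos hg)

lemma hfun_le_of_le_hinv (hρ : 1 < ρ) {y : ℝ} (h : y ≤ hinv ρ t) : hfun ρ y ≤ t :=
  hfun_hinv hρ t ▸ hfun_monotone hρ h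

lemma le_hfun_of_hinv_le (hρ : 1 < ρ) {y : ℝ} (h : hinv ρ t ≤ y) : t ≤ hfun ρ y :=
  hfun_hinv hρ t ▸ hfun_monotone hρ h

lemma hfun_logb_sub_le_of_div_le (hρ : 1 < ρ) (hW : 0 < W) (hk : 0 < k)
    (h : k / (ρ ^ t * lrho ρ t) ≤ W * Real.exp δ / (ρ - 1)) :
    hfun ρ (Real.logb ρ (k * (ρ - 1) / W) - δ / Real.log ρ) ≤ t := by
  have hρ1 : 0 < ρ - 1 := by linarith
  have hP : 0 < ρ ^ hinv ρ t := Real.rpow_pos_of_pos (by linarith) _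
  rw [rpow_mul_lrho hρ, div_le_div_iff₀ hP hρ1] at h
  have hlogb := logb_le_add_of_le_exp_mul hρ (div_pos (mul_pos hk hρ1) hW)
    (y := ρ ^ hinv ρ t) (δ := δ) (by rw [div_le_iff₀ hW]; linarith)
  rw [Real.logb_rpow (by linarith) hρ.ne'] at hlogb
  exact hfun_le_of_le_hinv hρ (by linarith)

lemma le_hfun_logb_add_of_le_div (hρ : 1 < ρ) (hW : 0 < W)
    (h : W * Real.exp (-δ) / (ρ - 1) ≤ k / (ρ ^ t * lrho ρ t)) :
    t ≤ hfun ρ (Real.logb ρ (k * (ρ - 1) / W) + δ / Real.log ρ) := by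
  have hρ1 : 0 < ρ - 1 := by linarith
  have hP : 0 < ρ ^ hinv ρ t := Real.rpow_pos_of_pos (by linarith) _
  rw [rpow_mul_lrho hρ, div_le_div_iff₀ hρ1 hP, Real.exp_neg, mul_right_comm, ← div_eq_mul_inv,
    div_le_iff₀ (Real.exp_pos _)] at h
  have hlogb := logb_le_add_of_le_exp_mul hρ hP (y := k * (ρ - 1) / W) (δ := δ) (by
    rw [mul_div_assoc', le_div_iff₀ hW]; linarith)
  rw [Real.logb_rpow (by linarith) hρ.ne'] at hlogb
  exact le_hfun_of_hinv_le hρ hlogb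

end

theorem stmt13 (ρ W : ℝ) (hρ : 1 < ρ) (hW : 0 < W) (τ : ℕ → ℝ)
    (hτ : ∀ δ > (0 : ℝ), ∀ᶠ k : ℕ in atTop,
      (k : ℝ) / (ρ ^ τ k * lrho ρ (τ k)) ≤ W * Real.exp δ / (ρ - 1) ∧
      W * Real.exp (-δ) / (ρ - 1) ≤ (k : ℝ) / (ρ ^ (τ k - δ) * lrho ρ (τ k - δ))) :
    Tendsto (fun k : ℕ =>
        τ k - hfun ρ (Real.logb ρ ((k : ℝ) * (ρ - 1) / W)))
      atTop (nhds 0) := by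
  have hlog : 0 < Real.log ρ := Real.log_pos hρ
  refine tendsto_sub_comp_of_squeeze (hfun_uniformContinuous hρ) fun δ hδ => ?_
  set δ₀ := min δ (δ * Real.log ρ)
  have hδ₀ : 0 < δ₀ := lt_min hδ (mul_pos hδ hlog)
  have hδ₀δ : δ₀ ≤ δ := min_le_left _ _
  have hδ₀log : δ₀ / Real.log ρ ≤ δ := (div_le_iff₀ hlog).2 (min_le_right _ _)
  filter_upwards [hτ δ₀ hδ₀, eventually_gt_atTop 0] with k ⟨hup, hdown⟩ hk
  set T := Real.logb ρ ((k : ℝ) * (ρ - 1) / W)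
  have hlo := hfun_logb_sub_le_of_div_le hρ hW (Nat.cast_pos.2 hk) hup
  have hhi := le_hfun_logb_add_of_le_div hρ hW hdown
  constructor
  · exact (hfun_monotone hρ (by linarith)).trans hlo
  · linarith [hfun_monotone hρ (show T + δ₀ / Real.log ρ ≤ T + δ by linarith)]
end

section
/- Let p ∈ [1,2] and let (M_k)_{0≤k≤N} be a real martingale with increments d_k = M_k − M_{k−1}. Then E[|M_N|^p] ≤ C_p Σ_{k=1}^N E[|d_k|^p] for a constant C_p depending only on p (Topchii–Vatutin / von Bahr–Esseen inequality). -/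
/-!
For `1 ≤ p ≤ 2` the function `φ x = |x| ^ p` satisfies
`φ (x + y) ≤ φ x + φ' x * y + 6 |y| ^ p`: when `|y| < |x|` this is the mean value theorem combined
with the `(p - 1)`-Hölder continuity of `φ'`, and otherwise every term is of order `|y| ^ p`.
Taking `x = M k`, `y = M (k + 1) - M k` and integrating, the term `φ' (M k) * y` has mean zero
because `φ' (M k)` is `ℱ k`-measurable, so `E |M (k + 1)| ^ p ≤ E |M k| ^ p + 6 E |M (k + 1) - M k| ^ p`;
induction gives the theorem with `C = 6`.
-/

open MeasureTheory

theorem Real.measurable_sign : Measurable Real.sign :=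
  Measurable.ite (measurableSet_lt measurable_id measurable_const) measurable_const <|
    Measurable.ite (measurableSet_lt measurable_const measurable_id) measurable_const
      measurable_const

theorem Real.abs_rpow_sub_rpow_le {q a b : ℝ} (hq0 : 0 ≤ q) (hq1 : q ≤ 1) (ha : 0 ≤ a)
    (hb : 0 ≤ b) : |a ^ q - b ^ q| ≤ |a - b| ^ q := by
  wlog hba : b ≤ a generalizing a b
  · rw [abs_sub_comm, abs_sub_comm a]
    exact this hb ha (le_of_not_ge hba)
  have h := Real.rpow_add_le_add_rpow (sub_nonneg.2 hba) hb hq0 hq1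
  rw [sub_add_cancel] at h
  rw [abs_of_nonneg (sub_nonneg.2 (Real.rpow_le_rpow hb hba hq0)),
    abs_of_nonneg (sub_nonneg.2 hba)]
  linarith

theorem Real.rpow_sub_one_mul_self {a p : ℝ} (ha : 0 ≤ a) (hp : p ≠ 0) :
    a ^ (p - 1) * a = a ^ p := by
  rw [← Real.rpow_add_one' ha (by simpa using hp), sub_add_cancel]

/-- `p * signedRpow (p - 1)` is the derivative of `x ↦ |x| ^ p`. -/
noncomputable def signedRpow (q x : ℝ) : ℝ := Real.sign x * |x| ^ q

theorem signedRpow_of_pos {q x : ℝ} (hx : 0 < x) : signedRpow q x = x ^ q := by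
  rw [signedRpow, Real.sign_of_pos hx, abs_of_pos hx, one_mul]

theorem signedRpow_neg (q x : ℝ) : signedRpow q (-x) = -signedRpow q x := by
  simp [signedRpow, Real.sign_neg]

theorem abs_signedRpow_le (q x : ℝ) : |signedRpow q x| ≤ |x| ^ q := by
  rw [signedRpow, abs_mul, abs_of_nonneg (Real.rpow_nonneg (abs_nonneg x) q)]
  apply mul_le_of_le_one_left (Real.rpow_nonneg (abs_nonneg x) q)
  rcases Real.sign_apply_eq x with h | h | h <;> simp [h]

theorem measurable_signedRpow (q : ℝ) : Measurable (signedRpow q) :=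
  Real.measurable_sign.mul (measurable_abs.pow_const q)

theorem abs_signedRpow_mul_le {p : ℝ} (hp : 1 ≤ p) (a b : ℝ) :
    |signedRpow (p - 1) a * b| ≤ max |a| |b| ^ p := by
  calc |signedRpow (p - 1) a * b| ≤ |a| ^ (p - 1) * |b| := by
        rw [abs_mul]
        gcongr
        exact abs_signedRpow_le _ a
    _ ≤ max |a| |b| ^ (p - 1) * max |a| |b| :=
        mul_le_mul (Real.rpow_le_rpow (abs_nonneg a) (le_max_left _ _) (by linarith))
          (le_max_right _ _) (abs_nonneg b) (by positivity)
    _ = max |a| |b| ^ p :=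
        Real.rpow_sub_one_mul_self (le_max_of_le_left (abs_nonneg a)) (by linarith)

theorem max_rpow_le_add_rpow {p a b : ℝ} (ha : 0 ≤ a) (hb : 0 ≤ b) :
    max a b ^ p ≤ a ^ p + b ^ p := by
  rcases max_choice a b with h | h <;> rw [h]
  · linarith [Real.rpow_nonneg hb p]
  · linarith [Real.rpow_nonneg ha p]

theorem rpow_add_le_of_abs_lt {p x y : ℝ} (hp1 : 1 ≤ p) (hp2 : p ≤ 2) (hy : |y| < x) :
    (x + y) ^ p ≤ x ^ p + p * x ^ (p - 1) * y + 2 * |y| ^ p := by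
  have hq0 : 0 ≤ p - 1 := by linarith
  have hpos : ∀ t ∈ Set.Icc (0 : ℝ) 1, 0 < x + t * y := fun t ht => by
    have : |t * y| ≤ |y| := by
      rw [abs_mul, abs_of_nonneg ht.1]
      exact mul_le_of_le_one_left (abs_nonneg y) ht.2
    linarith [neg_abs_le (t * y)]
  have hderiv : ∀ t ∈ Set.Icc (0 : ℝ) 1,
      HasDerivAt (fun t => (x + t * y) ^ p) (p * (x + t * y) ^ (p - 1) * y) t := fun t ht => by
    have hlin : HasDerivAt (fun t => x + t * y) y t := by
      simpa using ((hasDerivAt_id t).mul_const y).const_add x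
    convert hlin.rpow_const (Or.inl (hpos t ht).ne') using 1
    ring
  obtain ⟨c, hc, hslope⟩ := exists_hasDerivAt_eq_slope (fun t => (x + t * y) ^ p)
    (fun t => p * (x + t * y) ^ (p - 1) * y) one_pos
    (fun t ht => (hderiv t ht).continuousAt.continuousWithinAt)
    (fun t ht => hderiv t (Set.mem_Icc_of_Ioo ht))
  simp only [one_mul, zero_mul, add_zero, div_one, sub_zero] at hslope
  have hholder : |(x + c * y) ^ (p - 1) - x ^ (p - 1)| ≤ |y| ^ (p - 1) := by
    calc |(x + c * y) ^ (p - 1) - x ^ (p - 1)| ≤ |x + c * y - x| ^ (p - 1) :=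
          Real.abs_rpow_sub_rpow_le hq0 (by linarith) (hpos c (Set.mem_Icc_of_Ioo hc)).le
            ((abs_nonneg y).trans hy.le)
      _ ≤ |y| ^ (p - 1) := by
          rw [add_sub_cancel_left, abs_mul, abs_of_pos hc.1]
          exact Real.rpow_le_rpow (mul_nonneg hc.1.le (abs_nonneg y))
            (mul_le_of_le_one_left (abs_nonneg y) hc.2.le) hq0
  have hremainder : p * (((x + c * y) ^ (p - 1) - x ^ (p - 1)) * y) ≤ 2 * |y| ^ p :=
    calc p * (((x + c * y) ^ (p - 1) - x ^ (p - 1)) * y)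
        ≤ p * (|(x + c * y) ^ (p - 1) - x ^ (p - 1)| * |y|) := by
          rw [← abs_mul]
          exact mul_le_mul_of_nonneg_left (le_abs_self _) (by linarith)
      _ ≤ 2 * (|y| ^ (p - 1) * |y|) := by gcongr
      _ = 2 * |y| ^ p := by rw [Real.rpow_sub_one_mul_self (abs_nonneg y) (by linarith)]
  linear_combination -hslope + hremainder

theorem abs_add_rpow_le {p : ℝ} (hp1 : 1 ≤ p) (hp2 : p ≤ 2) (x y : ℝ) :
    |x + y| ^ p ≤ |x| ^ p + p * signedRpow (p - 1) x * y + 6 * |y| ^ p := by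
  have hp0 : 0 ≤ p := by linarith
  rcases le_or_gt |x| |y| with hxy | hyx
  · have hlin : |p * signedRpow (p - 1) x * y| ≤ 2 * |y| ^ p := by
      rw [mul_assoc, abs_mul, abs_of_nonneg hp0, ← max_eq_right hxy]
      gcongr
      exact abs_signedRpow_mul_le hp1 x y
    have hsum : |x + y| ^ p ≤ 4 * |y| ^ p :=
      calc |x + y| ^ p ≤ (2 * |y|) ^ p := by
            gcongr
            linarith [abs_add_le x y]
        _ = 2 ^ p * |y| ^ p := Real.mul_rpow zero_le_two (abs_nonneg y)
        _ ≤ 2 ^ (2 : ℝ) * |y| ^ p := by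
            gcongr
            · norm_num
        _ = 4 * |y| ^ p := by norm_num
    linarith [neg_abs_le (p * signedRpow (p - 1) x * y), Real.rpow_nonneg (abs_nonneg x) p]
  wlog hx : 0 < x generalizing x y
  · have hx' : 0 < -x := by
      obtain h | rfl := (not_lt.1 hx).lt_or_eq
      · exact neg_pos.2 h
      · exact absurd hyx (by simp)
    have := this (-x) (-y) (by simpa using hyx) hx'
    simp only [← neg_add, abs_neg, signedRpow_neg] at this
    linarith
  rw [abs_of_pos hx] at hyx ⊢
  have hxy : 0 < x + y := by linarith [neg_abs_le y]
  rw [abs_of_pos hxy, signedRpow_of_pos hx]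
  linarith [rpow_add_le_of_abs_lt hp1 hp2 hyx, Real.rpow_nonneg (abs_nonneg y) p]

theorem MeasureTheory.Martingale.integral_mul_sub_eq_zero {ι Ω : Type*} [Preorder ι]
    {m : MeasurableSpace Ω} {μ : Measure Ω} [IsFiniteMeasure μ] {ℱ : Filtration ι m}
    {M : ι → Ω → ℝ} (hM : Martingale M ℱ μ) {i j : ι} (hij : i ≤ j) {g : Ω → ℝ}
    (hg : StronglyMeasurable[ℱ i] g) (hgM : Integrable (g * (M j - M i)) μ) :
    ∫ ω, g ω * (M j ω - M i ω) ∂μ = 0 := by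
  have hincrement : μ[M j - M i|ℱ i] =ᵐ[μ] 0 := by
    filter_upwards [condExp_sub (hM.integrable j) (hM.integrable i) (ℱ i),
      hM.condExp_ae_eq hij] with ω hsub hj
    rw [hsub, Pi.sub_apply, hj,
      condExp_of_stronglyMeasurable (ℱ.le i) (hM.stronglyAdapted i) (hM.integrable i)]
    exact sub_self _
  have hpullout : μ[g * (M j - M i)|ℱ i] =ᵐ[μ] 0 := by
    filter_upwards [condExp_mul_of_stronglyMeasurable_left hg hgM
      ((hM.integrable j).sub (hM.integrable i)), hincrement] with ω hmul hzero
    rw [hmul, Pi.mul_apply, hzero, Pi.zero_apply, mul_zero]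
  calc ∫ ω, g ω * (M j ω - M i ω) ∂μ = ∫ ω, μ[g * (M j - M i)|ℱ i] ω ∂μ :=
        (integral_condExp (ℱ.le i)).symm
    _ = 0 := by rw [integral_congr_ae hpullout, integral_zero']

theorem MeasureTheory.MemLp.integrable_abs_rpow {Ω : Type*} {m : MeasurableSpace Ω}
    {μ : Measure Ω} {f : Ω → ℝ} {p : ℝ} (hp : 0 < p) (hf : MemLp f (ENNReal.ofReal p) μ) :
    Integrable (fun ω => |f ω| ^ p) μ := by
  simpa [ENNReal.toReal_ofReal hp.le, Real.norm_eq_abs] using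
    hf.integrable_norm_rpow (by simpa using hp) ENNReal.ofReal_ne_top

theorem MeasureTheory.Martingale.integral_abs_rpow_succ_le {Ω : Type*} {m : MeasurableSpace Ω}
    {μ : Measure Ω} [IsProbabilityMeasure μ] {ℱ : Filtration ℕ m} {M : ℕ → Ω → ℝ}
    (hM : Martingale M ℱ μ) {p : ℝ} (hp1 : 1 ≤ p) (hp2 : p ≤ 2)
    (hLp : ∀ k, MemLp (M k) (ENNReal.ofReal p) μ) (k : ℕ) :
    ∫ ω, |M (k + 1) ω| ^ p ∂μ
      ≤ ∫ ω, |M k ω| ^ p ∂μ + 6 * ∫ ω, |M (k + 1) ω - M k ω| ^ p ∂μ := by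
  have hp0 : 0 < p := by linarith
  set g := signedRpow (p - 1) ∘ M k
  have hg : StronglyMeasurable[ℱ k] g :=
    ((measurable_signedRpow _).comp (hM.stronglyAdapted k).measurable).stronglyMeasurable
  have hdLp : MemLp (M (k + 1) - M k) (ENNReal.ofReal p) μ := (hLp (k + 1)).sub (hLp k)
  have hMint := (hLp k).integrable_abs_rpow hp0
  have hdint : Integrable (fun ω => |M (k + 1) ω - M k ω| ^ p) μ := hdLp.integrable_abs_rpow hp0
  have hgd : Integrable (g * (M (k + 1) - M k)) μ := by
    refine Integrable.mono' (hMint.add hdint)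
      ((hg.mono (ℱ.le k)).aestronglyMeasurable.mul
        (hdLp.integrable (ENNReal.one_le_ofReal.2 hp1)).aestronglyMeasurable) ?_
    filter_upwards with ω
    exact (abs_signedRpow_mul_le hp1 _ _).trans
      (max_rpow_le_add_rpow (abs_nonneg _) (abs_nonneg _))
  have hlin : Integrable (fun ω => p * (g ω * (M (k + 1) ω - M k ω))) μ := hgd.const_mul p
  have horth := hM.integral_mul_sub_eq_zero k.le_succ hg hgd
  calc ∫ ω, |M (k + 1) ω| ^ p ∂μ
      ≤ ∫ ω, (|M k ω| ^ p + p * (g ω * (M (k + 1) ω - M k ω))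
          + 6 * |M (k + 1) ω - M k ω| ^ p) ∂μ := by
        refine integral_mono ((hLp (k + 1)).integrable_abs_rpow hp0)
          ((hMint.add hlin).add (hdint.const_mul 6)) fun ω => ?_
        have := abs_add_rpow_le hp1 hp2 (M k ω) (M (k + 1) ω - M k ω)
        rw [add_sub_cancel] at this
        simpa only [g, Function.comp_apply, mul_assoc] using this
    _ = ∫ ω, |M k ω| ^ p ∂μ + 6 * ∫ ω, |M (k + 1) ω - M k ω| ^ p ∂μ := by
        rw [integral_add (by exact hMint.add hlin) (hdint.const_mul 6), integral_add hMint hlin,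
          integral_const_mul, integral_const_mul, horth, mul_zero, add_zero]

theorem stmt19 (p : ℝ) (hp1 : 1 ≤ p) (hp2 : p ≤ 2) :
    ∃ C : ℝ, 0 < C ∧
      ∀ (Ω : Type) (m : MeasurableSpace Ω) (μ : Measure Ω),
        IsProbabilityMeasure μ →
      ∀ (ℱ : Filtration ℕ m) (M : ℕ → Ω → ℝ),
        Martingale M ℱ μ → M 0 = 0 →
        (∀ k, MemLp (M k) (ENNReal.ofReal p) μ) →
        ∀ N : ℕ,
          ∫ ω, |M N ω| ^ p ∂μ
            ≤ C * ∑ k ∈ Finset.Icc 1 N, ∫ ω, |M k ω - M (k - 1) ω| ^ p ∂μ := by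
  refine ⟨6, by norm_num, fun Ω m μ _ ℱ M hM hM0 hLp N => ?_⟩
  induction N with
  | zero => simp [hM0, Real.zero_rpow (by linarith : p ≠ 0)]
  | succ N ih =>
    rw [Finset.sum_Icc_succ_top (by omega), Nat.add_sub_cancel, mul_add]
    linarith [hM.integral_abs_rpow_succ_le hp1 hp2 hLp N]
end
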